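/- arXiv:2110.03222 — 4 statements merged into one kernel-verified Lean document; each statement's English description precedes it below -/
import Mathlib

section
/- Let d ≥ 1, q ≥ 1 and let ζ : ℝ^d → ℝ^q be twice continuously differentiable. Let x ∈ ℝ^d be a point at which the Gram matrix G(x) = g(x)^T g(x) is invertible (hence G is invertible on a neighborhood of x). Then the gradient of the function y ↦ ln det G(y) at x satisfies ∇(ln det G)(x) = 2 Σ_{i=1}^d g'(x)(e_i) G(x)^{-1} g(x)^T e_i. -/
open Matrix

/-!
Jacobi's formula `d(det A) = tr(adj A · dA)` gives `d(log det G)(v) = tr(G⁻¹ · dG(v))`, and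
`dG(v) = g'(v)ᵀ g + gᵀ g'(v)`. As `G⁻¹` is symmetric, both terms have the same trace, so the
`i`-th partial derivative of `log det G` is `2 tr(G⁻¹ gᵀ g'(eᵢ))`. The symmetry of the second
derivative of `ζ`, i.e. `g'(eᵢ)ₖⱼ = g'(eₖ)ᵢⱼ`, turns this trace into the `i`-th coordinate of
`2 Σₖ g'(eₖ) G⁻¹ gᵀ eₖ`.
-/

namespace Matrix

variable {m n R : Type*} [Fintype n] [CommRing R]

theorem trace_adjugate_mul_eq_sum_perm [DecidableEq n] (A H : Matrix n n R) :
    trace (A.adjugate * H) = ∑ σ : Equiv.Perm n, (Equiv.Perm.sign σ : R) *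
      ∑ a, H (σ a) a * ∏ i ∈ Finset.univ.erase a, A (σ i) i := by
  calc trace (A.adjugate * H) = ∑ a, (A.updateCol a (H.col a)).det := by
        refine Finset.sum_congr rfl fun a _ => ?_
        rw [← cramer_apply, cramer_eq_adjugate_mulVec, ← mulVec_single_one, mulVec_mulVec,
          mulVec_single_one]
        rfl
    _ = _ := by
        simp_rw [Finset.mul_sum]
        rw [Finset.sum_comm]
        refine Finset.sum_congr rfl fun a _ => ?_
        rw [det_apply']
        refine Finset.sum_congr rfl fun σ _ => ?_
        rw [← Finset.mul_prod_erase _ _ (Finset.mem_univ a), updateCol_self]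
        congr 2
        exact Finset.prod_congr rfl fun i hi => updateCol_ne (Finset.ne_of_mem_erase hi)

theorem trace_mul_transpose_mul_add [Fintype m] {S : Matrix n n R} (hS : S.IsSymm)
    (g B : Matrix m n R) :
    trace (S * (Bᵀ * g + gᵀ * B)) = 2 * trace (S * gᵀ * B) := by
  have h : trace (S * (Bᵀ * g)) = trace (S * gᵀ * B) := by
    rw [← trace_transpose, transpose_mul, transpose_mul, transpose_transpose, hS.eq,
      trace_mul_cycle]
  rw [Matrix.mul_add, trace_add, h, Matrix.mul_assoc, two_mul]

theorem trace_mul_eq_sum_mulVec_single [Fintype m] [DecidableEq m] {B : m → Matrix m n R}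
    (hB : ∀ i k j, B i k j = B k i j) (M : Matrix n m R) (i : m) :
    trace (M * B i) = ∑ k, (B k *ᵥ M *ᵥ Pi.single k 1) i := by
  simp only [mulVec_single_one]
  simp only [trace, diag, mul_apply, mulVec, dotProduct, col_apply, hB i]
  rw [Finset.sum_comm]
  simp_rw [mul_comm]

end Matrix

section MatrixFDeriv

variable {𝕜 E : Type*} [NontriviallyNormedField 𝕜] [NormedAddCommGroup E] [NormedSpace 𝕜 E]
  {l m n : Type*} {x : E}

noncomputable def matrixFDeriv (A : E → Matrix m n 𝕜) (x v : E) : Matrix m n 𝕜 :=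
  of fun i j => fderiv 𝕜 (fun y => A y i j) x v

theorem matrixFDeriv_transpose (A : E → Matrix m n 𝕜) (v : E) :
    matrixFDeriv (fun y => (A y)ᵀ) x v = (matrixFDeriv A x v)ᵀ :=
  rfl

theorem differentiableAt_mul_apply [Fintype m] {A : E → Matrix l m 𝕜} {B : E → Matrix m n 𝕜}
    (hA : ∀ i j, DifferentiableAt 𝕜 (fun y => A y i j) x)
    (hB : ∀ i j, DifferentiableAt 𝕜 (fun y => B y i j) x) (i : l) (k : n) :
    DifferentiableAt 𝕜 (fun y => (A y * B y) i k) x := by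
  simp only [mul_apply]
  fun_prop

theorem matrixFDeriv_mul [Fintype m] {A : E → Matrix l m 𝕜} {B : E → Matrix m n 𝕜}
    (hA : ∀ i j, DifferentiableAt 𝕜 (fun y => A y i j) x)
    (hB : ∀ i j, DifferentiableAt 𝕜 (fun y => B y i j) x) (v : E) :
    matrixFDeriv (fun y => A y * B y) x v =
      matrixFDeriv A x v * B x + A x * matrixFDeriv B x v := by
  ext i k
  simp only [matrixFDeriv, mul_apply, of_apply, Matrix.add_apply]
  rw [fderiv_fun_sum (A := fun j y => A y i j * B y j k) fun j _ => (hA i j).fun_mul (hB j k)]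
  simp [fderiv_fun_mul (hA _ _) (hB _ _), Finset.sum_add_distrib, mul_comm, add_comm]

variable [Fintype n] [DecidableEq n] {A : E → Matrix n n 𝕜}

theorem differentiableAt_det (hA : ∀ i j, DifferentiableAt 𝕜 (fun y => A y i j) x) :
    DifferentiableAt 𝕜 (fun y => (A y).det) x := by
  simp only [det_apply']
  fun_prop

theorem fderiv_det_apply (hA : ∀ i j, DifferentiableAt 𝕜 (fun y => A y i j) x) (v : E) :
    fderiv 𝕜 (fun y => (A y).det) x v = trace ((A x).adjugate * matrixFDeriv A x v) := by
  have hLeibniz := HasFDerivAt.fun_sum (u := Finset.univ) fun σ _ =>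
    (HasFDerivAt.finsetProd (u := Finset.univ) fun a _ => (hA (σ a) a).hasFDerivAt).const_mul
      ((Equiv.Perm.sign σ : ℤ) : 𝕜)
  simp only [← det_apply'] at hLeibniz
  rw [hLeibniz.fderiv, trace_adjugate_mul_eq_sum_perm]
  simp [matrixFDeriv, mul_comm]

end MatrixFDeriv

theorem fderiv_log_det_apply {E n : Type*} [NormedAddCommGroup E] [NormedSpace ℝ E] [Fintype n]
    [DecidableEq n] {x : E} {A : E → Matrix n n ℝ}
    (hA : ∀ i j, DifferentiableAt ℝ (fun y => A y i j) x) (hdet : (A x).det ≠ 0) (v : E) :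
    fderiv ℝ (fun y => Real.log (A y).det) x v = trace ((A x)⁻¹ * matrixFDeriv A x v) := by
  rw [fderiv.log (differentiableAt_det hA) hdet, _root_.smul_apply, fderiv_det_apply hA,
    inv_def, Ring.inverse_eq_inv', smul_mul, trace_smul, smul_eq_mul]

theorem hasFDerivAt_clm_fderiv_apply {𝕜 E F G : Type*} [NontriviallyNormedField 𝕜]
    [NormedAddCommGroup E] [NormedSpace 𝕜 E] [NormedAddCommGroup F] [NormedSpace 𝕜 F]
    [NormedAddCommGroup G] [NormedSpace 𝕜 G] {f : E → F} {x : E}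
    (hf : DifferentiableAt 𝕜 (fderiv 𝕜 f) x) (L : F →L[𝕜] G) (v : E) :
    HasFDerivAt (fun y => L (fderiv 𝕜 f y v))
      (L.comp ((ContinuousLinearMap.apply 𝕜 F v).comp (fderiv 𝕜 (fderiv 𝕜 f) x))) x :=
  (L.comp (ContinuousLinearMap.apply 𝕜 F v)).hasFDerivAt.comp x hf.hasFDerivAt

theorem fderiv_clm_fderiv_apply_comm {𝕜 E F G : Type*} [RCLike 𝕜] [NormedAddCommGroup E]
    [NormedSpace 𝕜 E] [NormedAddCommGroup F] [NormedSpace 𝕜 F] [NormedAddCommGroup G]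
    [NormedSpace 𝕜 G] {f : E → F} {x : E} (hf : ContDiffAt 𝕜 2 f x) (L : F →L[𝕜] G) (v w : E) :
    fderiv 𝕜 (fun y => L (fderiv 𝕜 f y v)) x w = fderiv 𝕜 (fun y => L (fderiv 𝕜 f y w)) x v := by
  have hf' : DifferentiableAt 𝕜 (fderiv 𝕜 f) x :=
    (hf.fderiv_right (m := 1) le_rfl).differentiableAt one_ne_zero
  rw [(hasFDerivAt_clm_fderiv_apply hf' L v).fderiv, (hasFDerivAt_clm_fderiv_apply hf' L w).fderiv]
  simp [hf.isSymmSndFDerivAt (by simp) w v]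

theorem EuclideanSpace.gradient_apply {ι : Type*} [Fintype ι] [DecidableEq ι]
    (f : EuclideanSpace ℝ ι → ℝ) (x : EuclideanSpace ℝ ι) (i : ι) :
    gradient f x i = fderiv ℝ f x (EuclideanSpace.single i 1) := by
  rw [← InnerProductSpace.toDual_symm_apply, EuclideanSpace.inner_single_right]
  simp [gradient]

theorem gradient_log_det_gram_general (d q : ℕ)
    (ζ : EuclideanSpace ℝ (Fin d) → EuclideanSpace ℝ (Fin q))
    (hζ : ContDiff ℝ 2 ζ)
    (g : EuclideanSpace ℝ (Fin d) → Matrix (Fin d) (Fin q) ℝ)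
    (hg : ∀ x i j, g x i j = fderiv ℝ ζ x (EuclideanSpace.single i 1) j)
    (g' : EuclideanSpace ℝ (Fin d) → EuclideanSpace ℝ (Fin d) →
      Matrix (Fin d) (Fin q) ℝ)
    (hg' : ∀ x v k j, g' x v k j = fderiv ℝ (fun y => g y k j) x v)
    (x : EuclideanSpace ℝ (Fin d)) (hG : IsUnit ((g x)ᵀ * g x)) :
    gradient (fun y => Real.log ((g y)ᵀ * g y).det) x
      = (2:ℝ) • (WithLp.equiv 2 (Fin d → ℝ)).symm
          (∑ i : Fin d, (g' x (EuclideanSpace.single i 1)).mulVec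
            (((g x)ᵀ * g x)⁻¹.mulVec ((g x)ᵀ.mulVec (Pi.single i 1)))) := by
  have hζx : ContDiffAt ℝ 2 ζ x := hζ.contDiffAt
  have hdζ : DifferentiableAt ℝ (fderiv ℝ ζ) x :=
    (hζx.fderiv_right (m := 1) le_rfl).differentiableAt one_ne_zero
  have hg_entry : ∀ k j, (fun y => g y k j) =
      fun y => EuclideanSpace.proj j (fderiv ℝ ζ y (EuclideanSpace.single k 1)) :=
    fun k j => funext fun y => hg y k j
  have hg_diff : ∀ k j, DifferentiableAt ℝ (fun y => g y k j) x := fun k j => by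
    rw [hg_entry]
    exact (hasFDerivAt_clm_fderiv_apply hdζ _ _).differentiableAt
  have hg'_eq : ∀ v, g' x v = matrixFDeriv g x v := fun v => Matrix.ext fun k j => hg' x v k j
  have hg'_symm : ∀ i k j, g' x (EuclideanSpace.single i 1) k j =
      g' x (EuclideanSpace.single k 1) i j := fun i k j => by
    rw [hg', hg', hg_entry, hg_entry]
    exact fderiv_clm_fderiv_apply_comm hζx _ _ _
  have hgT_diff : ∀ k j, DifferentiableAt ℝ (fun y => (g y)ᵀ k j) x := fun k j => hg_diff j k
  have hG_diff : ∀ k j, DifferentiableAt ℝ (fun y => ((g y)ᵀ * g y) k j) x :=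
    differentiableAt_mul_apply hgT_diff hg_diff
  have hdet : ((g x)ᵀ * g x).det ≠ 0 := ((isUnit_iff_isUnit_det _).mp hG).ne_zero
  have hG_symm : ((g x)ᵀ * g x)⁻¹.IsSymm :=
    IsSymm.inv (by rw [IsSymm, transpose_mul, transpose_transpose])
  ext i
  rw [EuclideanSpace.gradient_apply,
    fderiv_log_det_apply hG_diff hdet, matrixFDeriv_mul hgT_diff hg_diff,
    matrixFDeriv_transpose, ← hg'_eq, trace_mul_transpose_mul_add hG_symm,
    trace_mul_eq_sum_mulVec_single hg'_symm]
  simp only [← mulVec_mulVec]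
  simp

/-- Let `ζ : ℝ^d → ℝ^q` be `C²` with `g = ∇ζ` (transpose Jacobian,
`g(x)_{ij} = ∂ζ_j/∂x_i`) and Gram matrix `G = gᵀ g`. If `G(x)` is invertible, then
`∇(ln det G)(x) = 2 Σ_{i=1}^d g'(x)(e_i) G(x)⁻¹ g(x)ᵀ e_i`, where `g'(x)(v)` is the
directional derivative of `g` at `x` in direction `v`. -/
theorem gradient_log_det_gram (d q : ℕ) (hd : 1 ≤ d) (hq : 1 ≤ q)
    (ζ : EuclideanSpace ℝ (Fin d) → EuclideanSpace ℝ (Fin q))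
    (hζ : ContDiff ℝ 2 ζ)
    (g : EuclideanSpace ℝ (Fin d) → Matrix (Fin d) (Fin q) ℝ)
    (hg : ∀ x i j, g x i j = fderiv ℝ ζ x (EuclideanSpace.single i 1) j)
    (g' : EuclideanSpace ℝ (Fin d) → EuclideanSpace ℝ (Fin d) →
      Matrix (Fin d) (Fin q) ℝ)
    (hg' : ∀ x v k j, g' x v k j = fderiv ℝ (fun y => g y k j) x v)
    (x : EuclideanSpace ℝ (Fin d)) (hG : IsUnit ((g x)ᵀ * g x)) :
    gradient (fun y => Real.log ((g y)ᵀ * g y).det) x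
      = (2:ℝ) • (WithLp.equiv 2 (Fin d → ℝ)).symm
          (∑ i : Fin d, (g' x (EuclideanSpace.single i 1)).mulVec
            (((g x)ᵀ * g x)⁻¹.mulVec ((g x)ᵀ.mulVec (Pi.single i 1)))) :=
  gradient_log_det_gram_general d q ζ hζ g hg g' hg' x hG
end

section
/- Let d ≥ 1, q ≥ 1 and let ζ : ℝ^d → ℝ^q be twice continuously differentiable. Let x ∈ ℝ^d be a point at which the Gram matrix G(x) = g(x)^T g(x) is invertible. Then the following two vectors of ℝ^d coincide: Σ_{i=1}^d g'(x)(g(x) G(x)^{-1} g(x)^T e_i) G(x)^{-1} g(x)^T e_i = Σ_{i=1}^d g'(x)(e_i) G(x)^{-1} g(x)^T e_i. -/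
/-!
Write `A = g(x)`, `N = (AᵀA)⁻¹Aᵀ` and `P = AN`, so that the `i`-th summand on the left is
`g'(x)(P eᵢ) N eᵢ`. Since `g'(x)` is linear, expanding `P eᵢ` in the canonical basis and
exchanging the two sums turns the left side into `Σᵢ g'(x)(eᵢ) (NPᵀ) eᵢ`. Finally `NPᵀ = N`,
since `Pᵀ = P` (the inverse Gram matrix is symmetric) and `NA = 1`.
-/

open Matrix

theorem Matrix.inv_gram_mul_transpose_mul_transpose_projection {R m n : Type*} [CommRing R]
    [Fintype m] [Fintype n] [DecidableEq n] (A : Matrix m n R) (hA : IsUnit (Aᵀ * A)) :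
    (Aᵀ * A)⁻¹ * Aᵀ * (A * ((Aᵀ * A)⁻¹ * Aᵀ))ᵀ = (Aᵀ * A)⁻¹ * Aᵀ := by
  rw [transpose_mul, transpose_mul, transpose_nonsing_inv, transpose_mul, transpose_transpose]
  calc (Aᵀ * A)⁻¹ * Aᵀ * (A * (Aᵀ * A)⁻¹ * Aᵀ)
      = (Aᵀ * A)⁻¹ * (Aᵀ * A) * (Aᵀ * A)⁻¹ * Aᵀ := by simp only [Matrix.mul_assoc]
    _ = (Aᵀ * A)⁻¹ * Aᵀ := by
      rw [nonsing_inv_mul _ ((isUnit_iff_isUnit_det _).mp hA), Matrix.one_mul]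

theorem LinearMap.sum_mulVec_single_mulVec_single {R ι n M : Type*} [CommRing R] [Fintype ι]
    [DecidableEq ι] [AddCommGroup M] [Module R M] (B : (ι → R) →ₗ[R] (n → R) →ₗ[R] M)
    (P : Matrix ι ι R) (N : Matrix n ι R) :
    ∑ i, B (P *ᵥ Pi.single i 1) (N *ᵥ Pi.single i 1)
      = ∑ i, B (Pi.single i 1) ((N * Pᵀ) *ᵥ Pi.single i 1) := by
  have hP : ∀ i, P *ᵥ Pi.single i 1 = ∑ l, P l i • Pi.single l 1 := fun i => by
    ext k
    simp [Pi.single_apply]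
  have hN : ∀ l, (N * Pᵀ) *ᵥ Pi.single l 1 = ∑ i, P l i • N *ᵥ Pi.single i 1 := fun l => by
    ext k
    simp [Matrix.mul_apply, mul_comm]
  simp_rw [hP, hN, map_sum, map_smul, LinearMap.sum_apply, LinearMap.smul_apply]
  exact Finset.sum_comm

theorem Matrix.isLinearMap_of_entries {R E m n : Type*} [CommRing R] [AddCommGroup E]
    [Module R E] (F : E → Matrix m n R) (φ : m → n → E →ₗ[R] R)
    (h : ∀ v k j, F v k j = φ k j v) : IsLinearMap R F where
  map_add u v := by ext k j; simp [h]
  map_smul c v := by ext k j; simp [h]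

theorem fixman_sum_identity_general (d q : ℕ)
    (g : EuclideanSpace ℝ (Fin d) → Matrix (Fin d) (Fin q) ℝ)
    (g' : EuclideanSpace ℝ (Fin d) → EuclideanSpace ℝ (Fin d) →
      Matrix (Fin d) (Fin q) ℝ)
    (hg' : ∀ x v k j, g' x v k j = fderiv ℝ (fun y => g y k j) x v)
    (x : EuclideanSpace ℝ (Fin d)) (hG : IsUnit ((g x)ᵀ * g x)) :
    ∑ i : Fin d,
      (g' x ((WithLp.equiv 2 (Fin d → ℝ)).symm
          ((g x).mulVec (((g x)ᵀ * g x)⁻¹.mulVec ((g x)ᵀ.mulVec (Pi.single i 1)))))).mulVec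
        (((g x)ᵀ * g x)⁻¹.mulVec ((g x)ᵀ.mulVec (Pi.single i 1)))
      = ∑ i : Fin d,
        (g' x (EuclideanSpace.single i 1)).mulVec
          (((g x)ᵀ * g x)⁻¹.mulVec ((g x)ᵀ.mulVec (Pi.single i 1))) := by
  have hlin : IsLinearMap ℝ (g' x) :=
    isLinearMap_of_entries _ (fun k j => (fderiv ℝ (fun y => g y k j) x).toLinearMap)
      (hg' x)
  let L : (Fin d → ℝ) →ₗ[ℝ] Matrix (Fin d) (Fin q) ℝ :=
    hlin.mk'.comp (WithLp.linearEquiv 2 ℝ (Fin d → ℝ)).symm.toLinearMap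
  have key := (mulVecBilin ℝ ℝ ∘ₗ L).sum_mulVec_single_mulVec_single
    (g x * (((g x)ᵀ * g x)⁻¹ * (g x)ᵀ)) (((g x)ᵀ * g x)⁻¹ * (g x)ᵀ)
  rw [inv_gram_mul_transpose_mul_transpose_projection _ hG] at key
  simp only [← mulVec_mulVec] at key
  exact key

/-- Let `ζ : ℝ^d → ℝ^q` be `C²` with `g = ∇ζ` (transpose Jacobian) and
Gram matrix `G = gᵀ g`. If `G(x)` is invertible, then
`Σ_{i=1}^d g'(x)(g(x) G(x)⁻¹ g(x)ᵀ e_i) G(x)⁻¹ g(x)ᵀ e_i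
  = Σ_{i=1}^d g'(x)(e_i) G(x)⁻¹ g(x)ᵀ e_i`,
where `g'(x)(v)` is the directional derivative of `g` at `x` in direction `v`. -/
theorem fixman_sum_identity (d q : ℕ) (hd : 1 ≤ d) (hq : 1 ≤ q)
    (ζ : EuclideanSpace ℝ (Fin d) → EuclideanSpace ℝ (Fin q))
    (hζ : ContDiff ℝ 2 ζ)
    (g : EuclideanSpace ℝ (Fin d) → Matrix (Fin d) (Fin q) ℝ)
    (hg : ∀ x i j, g x i j = fderiv ℝ ζ x (EuclideanSpace.single i 1) j)
    (g' : EuclideanSpace ℝ (Fin d) → EuclideanSpace ℝ (Fin d) →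
      Matrix (Fin d) (Fin q) ℝ)
    (hg' : ∀ x v k j, g' x v k j = fderiv ℝ (fun y => g y k j) x v)
    (x : EuclideanSpace ℝ (Fin d)) (hG : IsUnit ((g x)ᵀ * g x)) :
    ∑ i : Fin d,
      (g' x ((WithLp.equiv 2 (Fin d → ℝ)).symm
          ((g x).mulVec (((g x)ᵀ * g x)⁻¹.mulVec ((g x)ᵀ.mulVec (Pi.single i 1)))))).mulVec
        (((g x)ᵀ * g x)⁻¹.mulVec ((g x)ᵀ.mulVec (Pi.single i 1)))
      = ∑ i : Fin d,
        (g' x (EuclideanSpace.single i 1)).mulVec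
          (((g x)ᵀ * g x)⁻¹.mulVec ((g x)ᵀ.mulVec (Pi.single i 1))) :=
  fixman_sum_identity_general d q g g' hg' x hG
end

section
/- Let ζ : ℝ^d → ℝ^q be continuously differentiable and write g(x) = ∇ζ(x) ∈ ℝ^{d×q} for the transpose of its Jacobian. Let x, y ∈ ℝ^d, w ∈ ℝ^d and λ ∈ ℝ^q be such that y = x + w + g(x) λ, and suppose the matrix G_{y−x}(x) is invertible. Then the Lagrange multiplier λ is uniquely determined and given explicitly by λ = G_{y−x}(x)^{-1} ( ζ(y) − ζ(x) − (∫₀¹ g(x + τ(y − x)) dτ)^T w ). -/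
open Matrix intervalIntegral
open scoped Matrix.Norms.L2Operator

/-!
By the fundamental theorem of calculus along the segment from `x` to `y`,
`ζ y - ζ x = Aᵀ (y - x)` with `A = ∫₀¹ g (x + τ (y - x)) dτ`. Substituting
`y - x = w + g x λ` turns this into `ζ y - ζ x - Aᵀ w = (Aᵀ g x) λ`, and `Aᵀ g x` is
invertible.
-/

section

variable {E F : Type*} [NormedAddCommGroup E] [NormedSpace ℝ E]
  [NormedAddCommGroup F] [NormedSpace ℝ F] [CompleteSpace F]

theorem sub_eq_integral_fderiv_apply {f : E → F} (hf : ContDiff ℝ 1 f) (x v : E) :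
    f (x + v) - f x = ∫ τ in (0:ℝ)..1, fderiv ℝ f (x + τ • v) v := by
  have hderiv (τ : ℝ) :
      HasDerivAt (fun t : ℝ => f (x + t • v)) (fderiv ℝ f (x + τ • v) v) τ := by
    have hline : HasDerivAt (fun t : ℝ => x + t • v) v τ := by
      simpa using ((hasDerivAt_id τ).smul_const v).const_add x
    exact ((hf.differentiable one_ne_zero) _).hasFDerivAt.comp_hasDerivAt τ hline
  have hcont : Continuous fun τ : ℝ => fderiv ℝ f (x + τ • v) v := by
    have hfderiv : Continuous (fderiv ℝ f) := (contDiff_one_iff_fderiv.mp hf).2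
    fun_prop
  simpa using (integral_eq_sub_of_hasDerivAt (fun τ _ => hderiv τ)
    (hcont.intervalIntegrable 0 1)).symm

end

variable {ι κ : Type*} [Fintype ι] [DecidableEq ι] [Fintype κ]

theorem Matrix.integral_toEuclideanLin_transpose_apply [DecidableEq κ]
    {f : ℝ → Matrix ι κ ℝ} {a b : ℝ} (hf : IntervalIntegrable f MeasureTheory.volume a b)
    (u : EuclideanSpace ℝ ι) :
    ∫ τ in a..b, toEuclideanLin (f τ)ᵀ u = toEuclideanLin (∫ τ in a..b, f τ)ᵀ u := by
  let L : Matrix ι κ ℝ →L[ℝ] EuclideanSpace ℝ κ := LinearMap.toContinuousLinearMap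
    (LinearMap.applyₗ u ∘ₗ toEuclideanLin.toLinearMap ∘ₗ
      (transposeLinearEquiv ι κ ℝ ℝ).toLinearMap)
  exact L.intervalIntegral_comp_comm hf

variable {ζ : EuclideanSpace ℝ ι → EuclideanSpace ℝ κ}
  {g : EuclideanSpace ℝ ι → Matrix ι κ ℝ}

theorem fderiv_apply_eq_toEuclideanLin_transpose
    (hg : ∀ x i j, g x i j = fderiv ℝ ζ x (EuclideanSpace.single i 1) j)
    (p u : EuclideanSpace ℝ ι) :
    fderiv ℝ ζ p u = toEuclideanLin (g p)ᵀ u := by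
  set D : EuclideanSpace ℝ ι →ₗ[ℝ] EuclideanSpace ℝ κ := (fderiv ℝ ζ p).toLinearMap
  refine LinearMap.congr_fun (f := D) ?_ u
  rw [toEuclideanLin_eq_toLin_orthonormal,
    ← Matrix.toLin_toMatrix (EuclideanSpace.basisFun ι ℝ).toBasis
      (EuclideanSpace.basisFun κ ℝ).toBasis D]
  congr 1
  ext j i
  simp [D, LinearMap.toMatrix_apply, hg]

theorem continuous_of_fderiv_entries (hζ : Continuous (fderiv ℝ ζ))
    (hg : ∀ x i j, g x i j = fderiv ℝ ζ x (EuclideanSpace.single i 1) j) : Continuous g := by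
  refine continuous_matrix fun i j => ?_
  simp only [hg]
  fun_prop

theorem Matrix.eq_toEuclideanLin_inv_of_eq_add [DecidableEq κ] {B : Matrix κ ι ℝ}
    {C : Matrix ι κ ℝ} (hBC : IsUnit (B * C)) {v w : EuclideanSpace ℝ ι}
    {lam : EuclideanSpace ℝ κ} (hv : v = w + toEuclideanLin C lam) :
    lam = toEuclideanLin (B * C)⁻¹ (toEuclideanLin B v - toEuclideanLin B w) := by
  rw [hv, map_add, add_sub_cancel_left, ← LinearMap.comp_apply, ← toLpLin_mul_same,
    ← LinearMap.comp_apply, ← toLpLin_mul_same, Matrix.mul_assoc,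
    nonsing_inv_mul _ ((isUnit_iff_isUnit_det _).mp hBC)]
  simp

theorem sub_eq_toEuclideanLin_integral_transpose [DecidableEq κ] (hζ : ContDiff ℝ 1 ζ)
    (hg : ∀ x i j, g x i j = fderiv ℝ ζ x (EuclideanSpace.single i 1) j)
    (x y : EuclideanSpace ℝ ι) :
    ζ y - ζ x = toEuclideanLin (∫ τ in (0:ℝ)..1, g (x + τ • (y - x)))ᵀ (y - x) := by
  have hgc : Continuous g := continuous_of_fderiv_entries (contDiff_one_iff_fderiv.mp hζ).2 hg
  have hpath : Continuous fun τ : ℝ => g (x + τ • (y - x)) := by fun_prop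
  rw [← integral_toEuclideanLin_transpose_apply (hpath.intervalIntegrable 0 1)]
  simp_rw [← fderiv_apply_eq_toEuclideanLin_transpose hg]
  simpa using sub_eq_integral_fderiv_apply hζ x (y - x)

/-- Let `ζ : ℝ^d → ℝ^q` be `C¹` with `g(x) = ∇ζ(x)` the transpose of its
Jacobian (`g(x)_{ij} = ∂ζ_j/∂x_i`). Let `x, y, w ∈ ℝ^d` and `λ ∈ ℝ^q` with
`y = x + w + g(x) λ`, and suppose `G_{y−x}(x) = (∫₀¹ g(x + τ(y−x)) dτ)ᵀ g(x)` is
invertible. Then `λ` is uniquely determined and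
`λ = G_{y−x}(x)⁻¹ (ζ(y) − ζ(x) − (∫₀¹ g(x + τ(y−x)) dτ)ᵀ w)`. -/
theorem lagrange_multiplier_explicit (d q : ℕ)
    (ζ : EuclideanSpace ℝ (Fin d) → EuclideanSpace ℝ (Fin q))
    (hζ : ContDiff ℝ 1 ζ)
    (g : EuclideanSpace ℝ (Fin d) → Matrix (Fin d) (Fin q) ℝ)
    (hg : ∀ x i j, g x i j = fderiv ℝ ζ x (EuclideanSpace.single i 1) j)
    (x y w : EuclideanSpace ℝ (Fin d)) (lam : EuclideanSpace ℝ (Fin q))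
    (hy : y = x + w + Matrix.toEuclideanLin (g x) lam)
    (hinv : IsUnit ((∫ τ in (0:ℝ)..1, g (x + τ • (y - x)))ᵀ * g x)) :
    lam = Matrix.toEuclideanLin (((∫ τ in (0:ℝ)..1, g (x + τ • (y - x)))ᵀ * g x)⁻¹)
      (ζ y - ζ x
        - Matrix.toEuclideanLin (∫ τ in (0:ℝ)..1, g (x + τ • (y - x)))ᵀ w) := by
  rw [sub_eq_toEuclideanLin_integral_transpose hζ hg x y]
  exact eq_toEuclideanLin_inv_of_eq_add hinv (by rw [hy]; abel)
end

section
/- Let B, L, c, M > 0. Let g : ℝ^d → ℝ^{d×q} be bounded by B and L-Lipschitz, and suppose that for all x, z ∈ ℝ^d the matrix G_z(x) is invertible with ‖G_z(x)^{-1}‖ ≤ 1/c. Fix x ∈ ℝ^d, h ∈ (0, 1], and u ∈ ℝ^d, b ∈ ℝ^q with |u| ≤ M√h and |b| ≤ M√h, and define F : ℝ^d → ℝ^d by F(y) = x + u + g(x) G_{y−x}(x)^{-1} ( b − (∫₀¹ g(x + τ(y − x)) dτ)^T u ). Then there exists C > 0 depending only on B, L, c, M (not on x, h, u, b) such that |F(y₂)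 − F(y₁)| ≤ C √h |y₂ − y₁| for all y₁, y₂ ∈ ℝ^d; in particular there exists h₀ > 0 depending only on B, L, c, M such that for every h ≤ h₀ the map F is a contraction and hence admits a unique fixed point in ℝ^d. -/
/-!
Write `A(y) = ∫₀¹ g(x + τ (y − x)) dτ` and `G(y) = A(y)ᵀ g(x)`. The average `A` inherits the bound
`B` and the Lipschitz constant `L` of `g`, and the resolvent identity
`G₂⁻¹ − G₁⁻¹ = G₂⁻¹ (G₁ − G₂) G₁⁻¹` with `‖Gᵢ⁻¹‖ ≤ 1/c` makes `y ↦ G(y)⁻¹` Lipschitz. The vector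
`b − A(y)ᵀ u` it acts on has size `O(√h)`, so `F` is Lipschitz with constant `C √h`, and Banach's
fixed point theorem applies as soon as `C √h < 1`.
-/

open Matrix intervalIntegral
open scoped Matrix.Norms.L2Operator NNReal

namespace Matrix

variable {𝕜 m n : Type*} [RCLike 𝕜] [Fintype m] [Fintype n] [DecidableEq n]

lemma l2_opNorm_toEuclideanLin_apply_le (A : Matrix m n 𝕜) (v : EuclideanSpace 𝕜 n) :
    ‖toEuclideanLin A v‖ ≤ ‖A‖ * ‖v‖ :=
  ((toEuclideanLin.trans LinearMap.toContinuousLinearMap) A).le_opNorm v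

lemma l2_opNorm_inv_sub_inv_le {G₁ G₂ : Matrix n n 𝕜} (h₁ : IsUnit G₁) (h₂ : IsUnit G₂) :
    ‖G₂⁻¹ - G₁⁻¹‖ ≤ ‖G₂⁻¹‖ * ‖G₁ - G₂‖ * ‖G₁⁻¹‖ := by
  rw [inv_sub_inv (iff_of_true h₂ h₁)]
  exact (l2_opNorm_mul _ _).trans (by gcongr; exact l2_opNorm_mul _ _)

lemma l2_opNorm_transpose [DecidableEq m] (A : Matrix m n ℝ) : ‖Aᵀ‖ = ‖A‖ := by
  rw [← conjTranspose_eq_transpose_of_trivial, l2_opNorm_conjTranspose]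

end Matrix

section SegmentAverage

variable {E F : Type*} [NormedAddCommGroup E] [NormedSpace ℝ E] [NormedAddCommGroup F]
  [NormedSpace ℝ F]

noncomputable def segmentAverage (g : E → F) (x z : E) : F := ∫ τ in (0:ℝ)..1, g (x + τ • z)

lemma norm_segmentAverage_le {g : E → F} {B : ℝ} (hg : ∀ y, ‖g y‖ ≤ B) (x z : E) :
    ‖segmentAverage g x z‖ ≤ B := by
  simpa [segmentAverage] using
    norm_integral_le_of_norm_le_const (a := 0) (b := 1) fun τ _ => hg (x + τ • z)

lemma norm_segmentAverage_sub_le {g : E → F} {K : ℝ≥0} (hg : LipschitzWith K g) (x z₁ z₂ : E) :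
    ‖segmentAverage g x z₂ - segmentAverage g x z₁‖ ≤ K * ‖z₂ - z₁‖ := by
  have hint (z : E) : IntervalIntegrable (fun τ : ℝ => g (x + τ • z)) MeasureTheory.volume 0 1 :=
    (hg.continuous.comp (by fun_prop)).intervalIntegrable 0 1
  have hpt : ∀ τ ∈ Set.uIoc (0:ℝ) 1, ‖g (x + τ • z₂) - g (x + τ • z₁)‖ ≤ K * ‖z₂ - z₁‖ := by
    intro τ hτ
    rw [Set.uIoc_of_le zero_le_one] at hτ
    calc ‖g (x + τ • z₂) - g (x + τ • z₁)‖ ≤ K * ‖(x + τ • z₂) - (x + τ • z₁)‖ :=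
          hg.norm_sub_le _ _
      _ = K * (τ * ‖z₂ - z₁‖) := by
          rw [add_sub_add_left_eq_sub, ← smul_sub, norm_smul, Real.norm_of_nonneg hτ.1.le]
      _ ≤ K * ‖z₂ - z₁‖ := by
          gcongr
          exact mul_le_of_le_one_left (norm_nonneg _) hτ.2
  rw [segmentAverage, segmentAverage, ← integral_sub (hint z₂) (hint z₁)]
  simpa using norm_integral_le_of_norm_le_const hpt

end SegmentAverage

section ProjectedStep

variable {m n : Type*} [Fintype m] [Fintype n] [DecidableEq m] [DecidableEq n]

noncomputable def projectedCorrection (P A : Matrix m n ℝ) (b : EuclideanSpace ℝ n)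
    (u : EuclideanSpace ℝ m) : EuclideanSpace ℝ m :=
  toEuclideanLin P (toEuclideanLin (Aᵀ * P)⁻¹ (b - toEuclideanLin Aᵀ u))

lemma norm_projectedCorrection_sub_le {P A₁ A₂ : Matrix m n ℝ} {B κ : ℝ}
    (hP : ‖P‖ ≤ B) (hA₂ : ‖A₂‖ ≤ B) (hG₁ : IsUnit (A₁ᵀ * P)) (hG₂ : IsUnit (A₂ᵀ * P))
    (hκ₁ : ‖(A₁ᵀ * P)⁻¹‖ ≤ κ) (hκ₂ : ‖(A₂ᵀ * P)⁻¹‖ ≤ κ)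
    (b : EuclideanSpace ℝ n) (u : EuclideanSpace ℝ m) :
    ‖projectedCorrection P A₂ b u - projectedCorrection P A₁ b u‖
      ≤ B * κ * (κ * B * (‖b‖ + B * ‖u‖) + ‖u‖) * ‖A₂ - A₁‖ := by
  rw [projectedCorrection, projectedCorrection, ← map_sub]
  set G₁ := A₁ᵀ * P
  set G₂ := A₂ᵀ * P
  set v₁ := b - toEuclideanLin A₁ᵀ u
  set v₂ := b - toEuclideanLin A₂ᵀ u
  have hB : 0 ≤ B := (norm_nonneg _).trans hP
  have hκ : 0 ≤ κ := (norm_nonneg _).trans hκ₁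
  have hG : ‖G₁ - G₂‖ ≤ ‖A₂ - A₁‖ * B := by
    calc ‖G₁ - G₂‖ = ‖(A₁ - A₂)ᵀ * P‖ := by rw [transpose_sub, Matrix.sub_mul]
      _ ≤ ‖(A₁ - A₂)ᵀ‖ * ‖P‖ := l2_opNorm_mul _ _
      _ ≤ ‖A₂ - A₁‖ * B := by rw [l2_opNorm_transpose, norm_sub_rev]; gcongr
  have hv₂ : ‖v₂‖ ≤ ‖b‖ + B * ‖u‖ := by
    calc ‖v₂‖ ≤ ‖b‖ + ‖A₂ᵀ‖ * ‖u‖ :=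
          (norm_sub_le _ _).trans (by gcongr; exact l2_opNorm_toEuclideanLin_apply_le _ _)
      _ ≤ ‖b‖ + B * ‖u‖ := by rw [l2_opNorm_transpose]; gcongr
  have hv : ‖v₂ - v₁‖ ≤ ‖A₂ - A₁‖ * ‖u‖ := by
    calc ‖v₂ - v₁‖ = ‖toEuclideanLin (A₁ - A₂)ᵀ u‖ := by
          rw [transpose_sub, map_sub, LinearMap.sub_apply, sub_sub_sub_cancel_left]
      _ ≤ ‖A₂ - A₁‖ * ‖u‖ := (l2_opNorm_toEuclideanLin_apply_le _ _).trans_eq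
          (by rw [l2_opNorm_transpose, norm_sub_rev])
  have hsplit : toEuclideanLin G₂⁻¹ v₂ - toEuclideanLin G₁⁻¹ v₁
      = toEuclideanLin (G₂⁻¹ - G₁⁻¹) v₂ + toEuclideanLin G₁⁻¹ (v₂ - v₁) := by
    simp only [v₁, v₂, map_sub, LinearMap.sub_apply]
    abel
  calc ‖toEuclideanLin P (toEuclideanLin G₂⁻¹ v₂ - toEuclideanLin G₁⁻¹ v₁)‖
      ≤ B * (‖G₂⁻¹ - G₁⁻¹‖ * ‖v₂‖ + ‖G₁⁻¹‖ * ‖v₂ - v₁‖) := by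
        refine (l2_opNorm_toEuclideanLin_apply_le _ _).trans ?_
        rw [hsplit]
        gcongr
        refine (norm_add_le _ _).trans (add_le_add ?_ ?_) <;>
          exact l2_opNorm_toEuclideanLin_apply_le _ _
    _ ≤ B * ((κ * (‖A₂ - A₁‖ * B) * κ) * (‖b‖ + B * ‖u‖) + κ * (‖A₂ - A₁‖ * ‖u‖)) := by
        gcongr
        exact (l2_opNorm_inv_sub_inv_le hG₁ hG₂).trans (by gcongr)
    _ = B * κ * (κ * B * (‖b‖ + B * ‖u‖) + ‖u‖) * ‖A₂ - A₁‖ := by ring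

noncomputable def projectedStepMap (g : EuclideanSpace ℝ m → Matrix m n ℝ)
    (x u : EuclideanSpace ℝ m) (b : EuclideanSpace ℝ n) (y : EuclideanSpace ℝ m) :
    EuclideanSpace ℝ m :=
  x + u + projectedCorrection (g x) (segmentAverage g x (y - x)) b u

lemma norm_projectedStepMap_sub_le {g : EuclideanSpace ℝ m → Matrix m n ℝ} {B κ : ℝ} {K : ℝ≥0}
    (hgB : ∀ x, ‖g x‖ ≤ B) (hg : LipschitzWith K g)
    (hinv : ∀ x z, IsUnit ((segmentAverage g x z)ᵀ * g x))
    (hinvb : ∀ x z, ‖((segmentAverage g x z)ᵀ * g x)⁻¹‖ ≤ κ)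
    (x u : EuclideanSpace ℝ m) (b : EuclideanSpace ℝ n) (y₁ y₂ : EuclideanSpace ℝ m) :
    ‖projectedStepMap g x u b y₂ - projectedStepMap g x u b y₁‖
      ≤ B * κ * (κ * B * (‖b‖ + B * ‖u‖) + ‖u‖) * K * ‖y₂ - y₁‖ := by
  have hB : 0 ≤ B := (norm_nonneg _).trans (hgB x)
  have hκ : 0 ≤ κ := (norm_nonneg _).trans (hinvb x 0)
  set A := segmentAverage g x
  calc ‖projectedStepMap g x u b y₂ - projectedStepMap g x u b y₁‖
      = ‖projectedCorrection (g x) (A (y₂ - x)) b u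
          - projectedCorrection (g x) (A (y₁ - x)) b u‖ := by
        rw [projectedStepMap, projectedStepMap, add_sub_add_left_eq_sub]
    _ ≤ B * κ * (κ * B * (‖b‖ + B * ‖u‖) + ‖u‖) * ‖A (y₂ - x) - A (y₁ - x)‖ :=
        norm_projectedCorrection_sub_le (hgB x) (norm_segmentAverage_le hgB _ _) (hinv _ _)
          (hinv _ _) (hinvb _ _) (hinvb _ _) b u
    _ ≤ B * κ * (κ * B * (‖b‖ + B * ‖u‖) + ‖u‖) * (K * ‖y₂ - y₁‖) := by
        gcongr
        simpa using norm_segmentAverage_sub_le hg x (y₁ - x) (y₂ - x)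
    _ = B * κ * (κ * B * (‖b‖ + B * ‖u‖) + ‖u‖) * K * ‖y₂ - y₁‖ := by ring

end ProjectedStep

lemma existsUnique_isFixedPt_of_dist_le {α : Type*} [MetricSpace α] [CompleteSpace α]
    [Nonempty α] {f : α → α} {k : ℝ} (hk : k < 1)
    (hf : ∀ x y, dist (f x) (f y) ≤ k * dist x y) : ∃! x, Function.IsFixedPt f x := by
  have hf' : ContractingWith k.toNNReal f :=
    ⟨Real.toNNReal_lt_one.mpr hk, LipschitzWith.of_dist_le' hf⟩
  exact ⟨_, hf'.fixedPoint_isFixedPt, fun _ hx => hf'.fixedPoint_unique hx⟩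

theorem fixed_point_map_uniform_contraction_general (d q : ℕ) (B L c M : ℝ)
    (hB : 0 < B) (hL : 0 < L) (hc : 0 < c) (hM : 0 < M)
    (g : EuclideanSpace ℝ (Fin d) → Matrix (Fin d) (Fin q) ℝ)
    (hgB : ∀ x, ‖g x‖ ≤ B)
    (hgL : ∀ x y, ‖g x - g y‖ ≤ L * ‖x - y‖)
    (hinv : ∀ x z : EuclideanSpace ℝ (Fin d),
      IsUnit ((∫ τ in (0:ℝ)..1, g (x + τ • z))ᵀ * g x))
    (hinvb : ∀ x z : EuclideanSpace ℝ (Fin d),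
      ‖(((∫ τ in (0:ℝ)..1, g (x + τ • z))ᵀ * g x)⁻¹ : Matrix (Fin q) (Fin q) ℝ)‖ ≤ 1 / c) :
    ∃ C > (0:ℝ), ∃ h₀ > (0:ℝ),
      ∀ (x : EuclideanSpace ℝ (Fin d)) (h : ℝ), 0 < h → h ≤ 1 →
      ∀ (u : EuclideanSpace ℝ (Fin d)) (b : EuclideanSpace ℝ (Fin q)),
        ‖u‖ ≤ M * Real.sqrt h → ‖b‖ ≤ M * Real.sqrt h →
        (∀ y₁ y₂ : EuclideanSpace ℝ (Fin d),
          ‖(x + u + Matrix.toEuclideanLin (g x)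
              (Matrix.toEuclideanLin (((∫ τ in (0:ℝ)..1, g (x + τ • (y₂ - x)))ᵀ * g x)⁻¹)
                (b - Matrix.toEuclideanLin (∫ τ in (0:ℝ)..1, g (x + τ • (y₂ - x)))ᵀ u)))
           - (x + u + Matrix.toEuclideanLin (g x)
              (Matrix.toEuclideanLin (((∫ τ in (0:ℝ)..1, g (x + τ • (y₁ - x)))ᵀ * g x)⁻¹)
                (b - Matrix.toEuclideanLin (∫ τ in (0:ℝ)..1, g (x + τ • (y₁ - x)))ᵀ u)))‖
            ≤ C * Real.sqrt h * ‖y₂ - y₁‖) ∧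
        (h ≤ h₀ → ∃! y : EuclideanSpace ℝ (Fin d),
          x + u + Matrix.toEuclideanLin (g x)
              (Matrix.toEuclideanLin (((∫ τ in (0:ℝ)..1, g (x + τ • (y - x)))ᵀ * g x)⁻¹)
                (b - Matrix.toEuclideanLin (∫ τ in (0:ℝ)..1, g (x + τ • (y - x)))ᵀ u))
            = y) := by
  have hg : LipschitzWith ⟨L, hL.le⟩ g :=
    LipschitzWith.of_dist_le_mul fun x y => by rw [dist_eq_norm, dist_eq_norm]; exact hgL x y
  set C := B * (1 / c) * (1 / c * B * (1 + B) + 1) * M * L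
  have hC : 0 < C := by positivity
  refine ⟨C, hC, (1 / (2 * C)) ^ 2, by positivity, fun x h _ _ u b hu hb => ?_⟩
  have hLip (y₁ y₂ : EuclideanSpace ℝ (Fin d)) :
      ‖projectedStepMap g x u b y₂ - projectedStepMap g x u b y₁‖ ≤ C * √h * ‖y₂ - y₁‖ :=
    calc _ ≤ B * (1 / c) * (1 / c * B * (‖b‖ + B * ‖u‖) + ‖u‖) * L * ‖y₂ - y₁‖ :=
          norm_projectedStepMap_sub_le hgB hg hinv hinvb x u b y₁ y₂
      _ ≤ B * (1 / c) * (1 / c * B * (M * √h + B * (M * √h)) + M * √h) * L * ‖y₂ - y₁‖ := by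
          gcongr
      _ = C * √h * ‖y₂ - y₁‖ := by ring
  refine ⟨hLip, fun hh₀ => existsUnique_isFixedPt_of_dist_le
    (f := projectedStepMap g x u b) ?_
    fun y₁ y₂ => by simpa only [dist_eq_norm] using hLip y₂ y₁⟩
  have hsqrt : √h ≤ 1 / (2 * C) := (Real.sqrt_le_sqrt hh₀).trans_eq (Real.sqrt_sq (by positivity))
  calc C * √h ≤ C * (1 / (2 * C)) := by gcongr
    _ = 1 / 2 := by field_simp
    _ < 1 := by norm_num

/-- Let `B, L, c, M > 0`, let `g : ℝ^d → ℝ^{d×q}` be bounded by `B` and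
`L`-Lipschitz, and suppose `G_z(x) = (∫₀¹ g(x + τ z) dτ)ᵀ g(x)` is invertible with
`‖G_z(x)⁻¹‖ ≤ 1/c` for all `x, z`. For `x ∈ ℝ^d`, `h ∈ (0,1]`, `|u| ≤ M√h`, `|b| ≤ M√h`,
define `F(y) = x + u + g(x) G_{y−x}(x)⁻¹ (b − (∫₀¹ g(x + τ(y−x)) dτ)ᵀ u)`. Then there is
`C > 0` depending only on `B, L, c, M` with `|F(y₂) − F(y₁)| ≤ C √h |y₂ − y₁|` for all
`y₁, y₂`; in particular there is `h₀ > 0` depending only on `B, L, c, M` such that for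
every `h ≤ h₀` the map `F` is a contraction and admits a unique fixed point. -/
theorem fixed_point_map_uniform_contraction (d q : ℕ) (B L c M : ℝ)
    (hB : 0 < B) (hL : 0 < L) (hc : 0 < c) (hM : 0 < M)
    (g : EuclideanSpace ℝ (Fin d) → Matrix (Fin d) (Fin q) ℝ)
    (hcont : Continuous g) (hgB : ∀ x, ‖g x‖ ≤ B)
    (hgL : ∀ x y, ‖g x - g y‖ ≤ L * ‖x - y‖)
    (hinv : ∀ x z : EuclideanSpace ℝ (Fin d),
      IsUnit ((∫ τ in (0:ℝ)..1, g (x + τ • z))ᵀ * g x))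
    (hinvb : ∀ x z : EuclideanSpace ℝ (Fin d),
      ‖(((∫ τ in (0:ℝ)..1, g (x + τ • z))ᵀ * g x)⁻¹ : Matrix (Fin q) (Fin q) ℝ)‖ ≤ 1 / c) :
    ∃ C > (0:ℝ), ∃ h₀ > (0:ℝ),
      ∀ (x : EuclideanSpace ℝ (Fin d)) (h : ℝ), 0 < h → h ≤ 1 →
      ∀ (u : EuclideanSpace ℝ (Fin d)) (b : EuclideanSpace ℝ (Fin q)),
        ‖u‖ ≤ M * Real.sqrt h → ‖b‖ ≤ M * Real.sqrt h →
        (∀ y₁ y₂ : EuclideanSpace ℝ (Fin d),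
          ‖(x + u + Matrix.toEuclideanLin (g x)
              (Matrix.toEuclideanLin (((∫ τ in (0:ℝ)..1, g (x + τ • (y₂ - x)))ᵀ * g x)⁻¹)
                (b - Matrix.toEuclideanLin (∫ τ in (0:ℝ)..1, g (x + τ • (y₂ - x)))ᵀ u)))
           - (x + u + Matrix.toEuclideanLin (g x)
              (Matrix.toEuclideanLin (((∫ τ in (0:ℝ)..1, g (x + τ • (y₁ - x)))ᵀ * g x)⁻¹)
                (b - Matrix.toEuclideanLin (∫ τ in (0:ℝ)..1, g (x + τ • (y₁ - x)))ᵀ u)))‖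
            ≤ C * Real.sqrt h * ‖y₂ - y₁‖) ∧
        (h ≤ h₀ → ∃! y : EuclideanSpace ℝ (Fin d),
          x + u + Matrix.toEuclideanLin (g x)
              (Matrix.toEuclideanLin (((∫ τ in (0:ℝ)..1, g (x + τ • (y - x)))ᵀ * g x)⁻¹)
                (b - Matrix.toEuclideanLin (∫ τ in (0:ℝ)..1, g (x + τ • (y - x)))ᵀ u))
            = y) :=
  fixed_point_map_uniform_contraction_general d q B L c M hB hL hc hM g hgB hgL hinv hinvb
end
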